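/- Let δ > 0. There exists σ₀ > 0, depending only on δ, such that the following holds. Let X be a δ-hyperbolic metric space in which, for all x,x' ∈ X and every l > 0, there is a (1,l)-quasi-geodesic joining x to x'; let G be a group acting on X by isometries, let σ ≥ σ₀, and let R be a σ-rotation family. Then for every (H,v) ∈ R, every h ∈ H∖{1} and every x ∈ X, one has (x, h·x)_v ≤ 2δ. -/

import Mathlib

open Metric

universe u v

/-- The Gromov product `(y,z)_x = (d(y,x)+d(z,x)-d(y,z))/2`. -/
noncomputable def gp {X : Type u} [MetricSpace X] (x y z : X) : ℝ :=
  (dist y x + dist z x - dist y z) / 2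

/-- `X` is `δ`-hyperbolic: the four point inequality. -/
def IsHyp (X : Type u) [MetricSpace X] (δ : ℝ) : Prop :=
  ∀ x y z t : X, min (gp t x y) (gp t y z) - δ ≤ gp t x z

/-- `γ` restricted to `[a,b]` is a `(1,l)`-quasi-geodesic. -/
def IsQG {X : Type u} [MetricSpace X] (l a b : ℝ) (γ : ℝ → X) : Prop :=
  ∀ t ∈ Set.Icc a b, ∀ t' ∈ Set.Icc a b,
    dist (γ t) (γ t') ≤ |t - t'| ∧ |t - t'| ≤ dist (γ t) (γ t') + l

/-- Any two points of `X` are joined by a `(1,l)`-quasi-geodesic, for every `l > 0`. -/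
def QGSpace (X : Type u) [MetricSpace X] : Prop :=
  ∀ x x' : X, ∀ l : ℝ, 0 < l →
    ∃ a b : ℝ, ∃ γ : ℝ → X, a ≤ b ∧ IsQG l a b γ ∧ γ a = x ∧ γ b = x'

/-- `Y` is `α`-quasi-convex. -/
def QConvex {X : Type u} [MetricSpace X] (α : ℝ) (Y : Set X) : Prop :=
  ∀ x : X, ∀ y ∈ Y, ∀ y' ∈ Y, infDist x Y ≤ gp x y y' + α

/-- The hull of `Y`: the union of the images of all `(1,δ)`-quasi-geodesics defined on
compact intervals whose two endpoints lie in `Y`. -/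
def hull {X : Type u} [MetricSpace X] (δ : ℝ) (Y : Set X) : Set X :=
  { z | ∃ a b : ℝ, ∃ γ : ℝ → X, a ≤ b ∧ IsQG δ a b γ ∧ γ a ∈ Y ∧ γ b ∈ Y ∧
      z ∈ γ '' Set.Icc a b }

/-- The `r`-neighborhood of a subset. -/
def nbhd {X : Type u} [MetricSpace X] (r : ℝ) (Z : Set X) : Set X :=
  { x | infDist x Z ≤ r }

/-- A `σ`-rotation family: a nonempty set of pairs (rotation subgroup, apex). -/
def IsRotFam {X : Type u} [MetricSpace X] {G : Type v} [Group G] [MulAction G X]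
    (σ : ℝ) (R : Set (Subgroup G × X)) : Prop :=
  R.Nonempty ∧
  (∀ p ∈ R, ∀ x : X, dist x p.2 ≤ σ / 10 → ∀ h ∈ p.1, h ≠ 1 →
      dist (h • x) x = 2 * dist p.2 x) ∧
  (∀ p ∈ R, ∀ q ∈ R, p ≠ q → σ ≤ dist p.2 q.2) ∧
  (∀ g : G, ∀ p ∈ R, (Subgroup.map (MulAut.conj g).toMonoidHom p.1, g • p.2) ∈ R)

/-- The set of apices of a rotation family. -/
def apices {G : Type v} {X : Type u} [Group G] (R : Set (Subgroup G × X)) : Set X :=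
  Prod.snd '' R

/-- The subgroup `K_Y` generated by all rotation subgroups whose apex lies in `Y`. -/
def rotSub {G : Type v} {X : Type u} [Group G] (R : Set (Subgroup G × X)) (Y : Set X) :
    Subgroup G :=
  ⨆ p ∈ { q ∈ R | q.2 ∈ Y }, p.1

/-- The orbit set `P • Z`. -/
def orbSet {G : Type v} {X : Type u} [Group G] [MulAction G X] (P : Subgroup G)
    (Z : Set X) : Set X :=
  { x | ∃ g ∈ P, ∃ z ∈ Z, x = g • z }

/-- An extended windmill `(W, N, V)` for the rotation family `R`. -/
def IsExtWindmill {X : Type u} [MetricSpace X] {G : Type v} [Group G] [MulAction G X]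
    (δ : ℝ) (R : Set (Subgroup G × X)) (W : Set X) (N : Subgroup G) (V : Set X) : Prop :=
  V ⊆ apices R ∧
  QConvex (2 * δ) W ∧
  (∀ g ∈ N ⊔ rotSub R V, ∀ w ∈ W, g • w ∈ W) ∧
  (∀ g ∈ N ⊔ rotSub R V, ∀ v ∈ V, g • v ∈ V) ∧
  (∀ p ∈ R, p.2 ∉ V → ∀ h ∈ p.1, h ≠ 1 → ∀ x ∈ W, ∀ x' ∈ W,
      gp p.2 x (h • x') ≤ 100 * δ) ∧
  (∀ p ∈ R, p.2 ∉ V → ∀ g ∈ N ⊔ rotSub R V, g • p.2 = p.2 → g = 1)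

/-
Let `v` be the apex of `(H, v)` and `h ∈ H ∖ {1}`; `h` fixes `v`, so it preserves Gromov products
based at `v`. Points `y` with `d(y, v) ≤ σ/10` satisfy `(y, hy)_v = 0`. If `x` is far from `v`,
pick `y` on a quasi-geodesic from `v` to `x` with `d(y, v) ≈ σ/10`; then `(x, y)_v ≳ σ/10 - δ` is
large, and the four point inequality, applied to `y, x, hy` and then to `x, hx, hy`, forces
first `(x, hy)_v ≤ δ` and then `(x, hx)_v ≤ 2δ`.
-/

section GromovProduct

variable {X : Type u} [MetricSpace X]

theorem gp_comm (x y z : X) : gp x y z = gp x z y := by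
  unfold gp
  rw [dist_comm y z]
  ring

theorem Isometry.gp_eq_of_apply_eq {f : X → X} (hf : Isometry f) {v : X} (hv : f v = v)
    (a b : X) : gp v (f a) (f b) = gp v a b := by
  unfold gp
  rw [← hv, hf.dist_eq, hf.dist_eq, hf.dist_eq, hv]

theorem IsHyp.nonneg {δ : ℝ} (hX : IsHyp X δ) (x : X) : 0 ≤ δ := by
  have := hX x x x x
  rw [min_self] at this
  linarith

theorem IsHyp.gp_le_add_of_lt {δ c : ℝ} (hX : IsHyp X δ) {t x y z : X}
    (hxz : gp t x z ≤ c) (hxy : c + δ < gp t x y) : gp t y z ≤ c + δ := by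
  have := hX x y z t
  exact (min_le_iff.mp (by linarith)).resolve_left (by linarith)

theorem IsHyp.gp_apply_le_of_gp_apply_eq_zero {δ : ℝ} (hX : IsHyp X δ) {f : X → X}
    (hf : Isometry f) {v x y : X} (hv : f v = v) (hy : gp v y (f y) = 0)
    (hxy : 2 * δ < gp v x y) : gp v x (f x) ≤ 2 * δ := by
  have hδ := hX.nonneg v
  have h_x_fy : gp v x (f y) ≤ 0 + δ :=
    hX.gp_le_add_of_lt hy.le (by rw [gp_comm]; linarith)
  have h_fy_fx : δ + δ < gp v (f y) (f x) := by
    rw [hf.gp_eq_of_apply_eq hv, gp_comm]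
    linarith
  have h_fy_x : gp v (f y) x ≤ δ := by
    rw [gp_comm]
    linarith
  have := hX.gp_le_add_of_lt h_fy_x h_fy_fx
  rw [gp_comm]
  linarith

end GromovProduct

theorem QGSpace.exists_dist_le_and_sub_le_gp {X : Type u} [MetricSpace X] (hX : QGSpace X)
    (v x : X) {l s : ℝ} (hl : 0 < l) (hs : 0 ≤ s) (hsx : s ≤ dist v x) :
    ∃ y : X, dist y v ≤ s ∧ s - l ≤ gp v x y := by
  obtain ⟨a, b, γ, hab, hγ, rfl, rfl⟩ := hX v x l hl
  have hxv := hγ a ⟨le_rfl, hab⟩ b ⟨hab, le_rfl⟩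
  rw [abs_sub_comm, abs_of_nonneg (sub_nonneg.mpr hab)] at hxv
  have hsb : a + s ≤ b := by linarith [hxv.1]
  have hy : a + s ∈ Set.Icc a b := ⟨by linarith, hsb⟩
  have hyv := hγ (a + s) hy a ⟨le_rfl, hab⟩
  have hxy := hγ b ⟨hab, le_rfl⟩ (a + s) hy
  rw [add_sub_cancel_left, abs_of_nonneg hs] at hyv
  rw [abs_of_nonneg (by linarith)] at hxy
  refine ⟨γ (a + s), hyv.1, ?_⟩
  unfold gp
  rw [dist_comm (γ b) (γ a)]
  linarith [hxv.2, hyv.2, hxy.1]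

section RotationFamily

variable {X : Type u} [MetricSpace X] {G : Type v} [Group G] [MulAction G X]
  {σ : ℝ} {R : Set (Subgroup G × X)} {p : Subgroup G × X} {h : G}

theorem IsRotFam.smul_apex (hR : IsRotFam σ R) (hp : p ∈ R) (hh : h ∈ p.1) (hh1 : h ≠ 1)
    (hσ : 0 ≤ σ) : h • p.2 = p.2 := by
  have := hR.2.1 p hp p.2 (by rw [dist_self]; positivity) h hh hh1
  rwa [dist_self, mul_zero, dist_eq_zero] at this

theorem IsRotFam.gp_smul_eq_zero (hR : IsRotFam σ R) (hiso : Isometry fun x : X => h • x)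
    (hp : p ∈ R) (hh : h ∈ p.1) (hh1 : h ≠ 1) {x : X} (hx : dist x p.2 ≤ σ / 10) :
    gp p.2 x (h • x) = 0 := by
  have hfix := hR.smul_apex hp hh hh1 (by linarith [dist_nonneg (x := x) (y := p.2)])
  have hxhx := hR.2.1 p hp x hx h hh hh1
  have hhx : dist (h • x) p.2 = dist x p.2 := by
    conv_lhs => rw [← hfix]
    exact hiso.dist_eq x p.2
  unfold gp
  rw [hhx, dist_comm x (h • x), hxhx, dist_comm x p.2]
  ring

end RotationFamily

/-- Small Gromov product at the apex of a rotation family. -/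
theorem rotation_family_small_product_at_apex (δ : ℝ) (hδ : 0 < δ) :
    ∃ σ₀ : ℝ, 0 < σ₀ ∧
      ∀ (X : Type u) [MetricSpace X] (G : Type v) [Group G] [MulAction G X],
        (∀ g : G, Isometry fun x : X => g • x) →
        IsHyp X δ → QGSpace X →
        ∀ σ : ℝ, σ₀ ≤ σ → ∀ R : Set (Subgroup G × X), IsRotFam σ R →
          ∀ p ∈ R, ∀ h ∈ p.1, h ≠ 1 → ∀ x : X, gp p.2 x (h • x) ≤ 2 * δ := by
  refine ⟨40 * δ, by positivity, ?_⟩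
  intro X _ G _ _ hiso hX hQG σ hσ R hR p hp h hh hh1 x
  rcases le_or_gt (dist x p.2) (σ / 10) with hx | hx
  · rw [hR.gp_smul_eq_zero (hiso h) hp hh hh1 hx]
    positivity
  · obtain ⟨y, hyv, hxy⟩ := hQG.exists_dist_le_and_sub_le_gp p.2 x hδ
      (s := σ / 10) (by linarith) (by rw [dist_comm]; exact hx.le)
    exact hX.gp_apply_le_of_gp_apply_eq_zero (hiso h) (hR.smul_apex hp hh hh1 (by linarith))
      (hR.gp_smul_eq_zero (hiso h) hp hh hh1 hyv) (by linarith)
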